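/- The subdifferential of the nuclear norm: for a matrix Z with (thin) SVD Z = U D V' where D has strictly positive diagonal, every matrix of the form UV' + W with U'W = 0, WV = 0 and spectral norm ‖W‖₂ ≤ 1 is a subgradient of ‖·‖_* at Z, i.e., for all Y, ‖Y‖_* ≥ ‖Z‖_* + ⟨UV' + W, Y − Z⟩ where ⟨A,B⟩ = tr(A'B). -/

import Mathlib

open Matrix BigOperators Finset

noncomputable section

/-- Squared Frobenius norm of a real matrix. -/
def frobSq {m n : ℕ} (A : Matrix (Fin m) (Fin n) ℝ) : ℝ :=
  ∑ i, ∑ j, (A i j) ^ 2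

/-- Frobenius norm. -/
def frobNorm {m n : ℕ} (A : Matrix (Fin m) (Fin n) ℝ) : ℝ :=
  Real.sqrt (frobSq A)

/-- The singular values of `A`, as square roots of the eigenvalues of `Aᴴ * A`. -/
def singVals {m n : ℕ} (A : Matrix (Fin m) (Fin n) ℝ) : Fin n → ℝ :=
  fun i => Real.sqrt ((show (Aᵀ * A).IsHermitian by
    simpa [Matrix.conjTranspose_eq_transpose_of_trivial] using
      Matrix.isHermitian_conjTranspose_mul_self A).eigenvalues i)

/-- Nuclear norm: the sum of the singular values. -/
def nnorm {m n : ℕ} (A : Matrix (Fin m) (Fin n) ℝ) : ℝ :=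
  ∑ i, singVals A i

/-- Spectral norm: the largest singular value. -/
def specNorm {m n : ℕ} (A : Matrix (Fin m) (Fin n) ℝ) : ℝ :=
  ⨆ i, singVals A i

/-- Projection onto the observed entries `Ω`. -/
def pO {m n : ℕ} (Ω : Finset (Fin m × Fin n)) (Y : Matrix (Fin m) (Fin n) ℝ) :
    Matrix (Fin m) (Fin n) ℝ :=
  fun i j => if (i, j) ∈ Ω then Y i j else 0

/-- Complementary projection `P_Ω^⊥ = I - P_Ω`. -/
def pOc {m n : ℕ} (Ω : Finset (Fin m × Fin n)) (Y : Matrix (Fin m) (Fin n) ℝ) :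
    Matrix (Fin m) (Fin n) ℝ :=
  Y - pO Ω Y

/-- The objective `f_λ(Z) = ½‖P_Ω(Z) - P_Ω(X)‖_F² + λ‖Z‖_*`. -/
def fObj {m n : ℕ} (Ω : Finset (Fin m × Fin n)) (X : Matrix (Fin m) (Fin n) ℝ) (lam : ℝ)
    (Z : Matrix (Fin m) (Fin n) ℝ) : ℝ :=
  (1 / 2) * frobSq (pO Ω Z - pO Ω X) + lam * nnorm Z

/-- The surrogate `Q_λ(Z | Z̃) = ½‖P_Ω(X) + P_Ω^⊥(Z̃) - Z‖_F² + λ‖Z‖_*`. -/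
def qObj {m n : ℕ} (Ω : Finset (Fin m × Fin n)) (X : Matrix (Fin m) (Fin n) ℝ) (lam : ℝ)
    (Z Zt : Matrix (Fin m) (Fin n) ℝ) : ℝ :=
  (1 / 2) * frobSq (pO Ω X + pOc Ω Zt - Z) + lam * nnorm Z

/-- `IsSVD W U d V` : `W = U D Vᵀ` is a thin SVD of `W` with strictly positive
singular values `d` and orthonormal columns in `U` and `V`. -/
def IsSVD {m n r : ℕ} (W : Matrix (Fin m) (Fin n) ℝ) (U : Matrix (Fin m) (Fin r) ℝ)
    (d : Fin r → ℝ) (V : Matrix (Fin n) (Fin r) ℝ) : Prop :=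
  Uᵀ * U = 1 ∧ Vᵀ * V = 1 ∧ (∀ i, 0 < d i) ∧ W = U * Matrix.diagonal d * Vᵀ

/-- Trace inner product `⟨A, B⟩ = tr(AᵀB)`. -/
def minner {m n : ℕ} (A B : Matrix (Fin m) (Fin n) ℝ) : ℝ :=
  ∑ i, ∑ j, A i j * B i j

/-- `G` is a subgradient of the nuclear norm at `Z`. -/
def NucSubgrad {m n : ℕ} (Z G : Matrix (Fin m) (Fin n) ℝ) : Prop :=
  ∀ Y, nnorm Z + minner G (Y - Z) ≤ nnorm Y

end

/-! The nuclear and spectral norms are dual: computing `tr(GᵀA)` in an orthonormal eigenbasis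
`qᵢ` of `AᵀA` gives `⟨G, A⟩ = ∑ᵢ ⟨G qᵢ, A qᵢ⟩`, and `‖A qᵢ‖` is the `i`-th singular value of `A`,
so Cauchy–Schwarz yields `⟨G, A⟩ ≤ ‖G‖₂ ‖A‖_*`. For `G = UVᵀ + W`, splitting `v = V Vᵀ v + w`
gives `‖G v‖² = ‖Vᵀ v‖² + ‖W w‖² ≤ ‖v‖²`, so `‖G‖₂ ≤ 1`. Finally `√(ZᵀZ) = V D Vᵀ`, whence
`‖Z‖_* = tr D = ⟨G, Z⟩`, and `‖Z‖_* + ⟨G, Y - Z⟩ = ⟨G, Y⟩ ≤ ‖Y‖_*`. -/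

namespace Matrix

lemma isHermitian_transpose_mul_self {m n : Type*} [Fintype m] (A : Matrix m n ℝ) :
    (Aᵀ * A).IsHermitian := by
  simpa [conjTranspose_eq_transpose_of_trivial] using isHermitian_conjTranspose_mul_self A

variable {l m n : Type*} [Fintype l] [Fintype m] [Fintype n]

lemma mulVec_dotProduct_mulVec (M : Matrix m l ℝ) (N : Matrix m n ℝ) (x : l → ℝ) (y : n → ℝ) :
    (M *ᵥ x) ⬝ᵥ (N *ᵥ y) = x ⬝ᵥ ((Mᵀ * N) *ᵥ y) := by
  rw [← mulVec_mulVec, dotProduct_mulVec x, vecMul_transpose]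

lemma dotProduct_le_sqrt_mul_sqrt (x y : n → ℝ) : x ⬝ᵥ y ≤ √(x ⬝ᵥ x) * √(y ⬝ᵥ y) := by
  simpa [dotProduct, sq] using Real.sum_mul_le_sqrt_mul_sqrt Finset.univ x y

lemma trace_eq_sum_dotProduct_mulVec [DecidableEq n] {Q : Matrix n n ℝ} (hQ : Q * Qᵀ = 1)
    (M : Matrix n n ℝ) : trace M = ∑ i, Qᵀ i ⬝ᵥ (M *ᵥ Qᵀ i) := by
  have hcycle : (Qᵀ * M * Q).trace = M.trace := by rw [trace_mul_cycle, hQ, Matrix.one_mul]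
  rw [← hcycle, trace]
  refine Finset.sum_congr rfl fun i _ => ?_
  simp only [diag_apply, mul_apply, dotProduct, mulVec, transpose_apply, Finset.sum_mul,
    Finset.mul_sum]
  rw [Finset.sum_comm]
  exact Finset.sum_congr rfl fun _ _ => Finset.sum_congr rfl fun _ _ => by ring

namespace IsHermitian

variable [DecidableEq n] {B : Matrix n n ℝ} (hB : B.IsHermitian)

lemma eigenvectorUnitary_mul_transpose_self :
    (hB.eigenvectorUnitary : Matrix n n ℝ) * (hB.eigenvectorUnitary : Matrix n n ℝ)ᵀ = 1 := by
  simpa [star_eq_conjTranspose] using Unitary.coe_mul_star_self hB.eigenvectorUnitary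

lemma eigenvectorBasis_dotProduct_self (i : n) :
    ⇑(hB.eigenvectorBasis i) ⬝ᵥ ⇑(hB.eigenvectorBasis i) = 1 := by
  have h := inner_self_eq_one_of_norm_eq_one (𝕜 := ℝ) (hB.eigenvectorBasis.orthonormal.1 i)
  rwa [EuclideanSpace.inner_eq_star_dotProduct, star_trivial] at h

lemma eigenvalues_eq_dotProduct (i : n) :
    hB.eigenvalues i = ⇑(hB.eigenvectorBasis i) ⬝ᵥ (B *ᵥ ⇑(hB.eigenvectorBasis i)) := by
  simpa using hB.eigenvalues_eq i

lemma sum_eigenvectorBasis_dotProduct_mul (u v : n → ℝ) :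
    ∑ i, (⇑(hB.eigenvectorBasis i) ⬝ᵥ u) * (⇑(hB.eigenvectorBasis i) ⬝ᵥ v) = u ⬝ᵥ v := by
  set Q : Matrix n n ℝ := (hB.eigenvectorUnitary : Matrix n n ℝ)
  have h := mulVec_dotProduct_mulVec Qᵀ Qᵀ u v
  rw [transpose_transpose, hB.eigenvectorUnitary_mul_transpose_self, one_mulVec] at h
  rw [← h, dotProduct]
  refine Finset.sum_congr rfl fun i _ => ?_
  simp [Q, mulVec, dotProduct]

lemma dotProduct_mulVec_le_of_eigenvalues_le {c : ℝ} (hc : ∀ i, hB.eigenvalues i ≤ c)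
    (x : n → ℝ) : x ⬝ᵥ (B *ᵥ x) ≤ c * (x ⬝ᵥ x) := by
  have hBt : Bᵀ = B := by simpa [conjTranspose_eq_transpose_of_trivial] using hB.eq
  have hcoord (i : n) : ⇑(hB.eigenvectorBasis i) ⬝ᵥ (B *ᵥ x) =
      hB.eigenvalues i * (⇑(hB.eigenvectorBasis i) ⬝ᵥ x) := by
    rw [dotProduct_mulVec, ← mulVec_transpose, hBt, mulVec_eigenvectorBasis, smul_dotProduct,
      smul_eq_mul]
  rw [← hB.sum_eigenvectorBasis_dotProduct_mul, ← hB.sum_eigenvectorBasis_dotProduct_mul,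
    Finset.mul_sum]
  refine Finset.sum_le_sum fun i _ => ?_
  rw [hcoord, mul_left_comm]
  exact mul_le_mul_of_nonneg_right (hc i) (mul_self_nonneg _)

end IsHermitian

lemma eigenvalues_transpose_mul_self [DecidableEq n] (A : Matrix m n ℝ) (i : n) :
    (isHermitian_transpose_mul_self A).eigenvalues i =
      (A *ᵥ ⇑((isHermitian_transpose_mul_self A).eigenvectorBasis i)) ⬝ᵥ
        (A *ᵥ ⇑((isHermitian_transpose_mul_self A).eigenvectorBasis i)) := by
  rw [IsHermitian.eigenvalues_eq_dotProduct, mulVec_dotProduct_mulVec]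

end Matrix

section SingularValues

variable {m n : ℕ}

lemma singVals_eq (A : Matrix (Fin m) (Fin n) ℝ) (i : Fin n) :
    singVals A i = √((isHermitian_transpose_mul_self A).eigenvalues i) := rfl

lemma nnorm_nonneg (A : Matrix (Fin m) (Fin n) ℝ) : 0 ≤ nnorm A :=
  Finset.sum_nonneg fun _ _ => Real.sqrt_nonneg _

lemma specNorm_nonneg (A : Matrix (Fin m) (Fin n) ℝ) : 0 ≤ specNorm A :=
  Real.iSup_nonneg fun _ => Real.sqrt_nonneg _

lemma singVals_le_specNorm (A : Matrix (Fin m) (Fin n) ℝ) (i : Fin n) :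
    singVals A i ≤ specNorm A :=
  le_ciSup (Set.finite_range _).bddAbove i

lemma specNorm_le_iff {A : Matrix (Fin m) (Fin n) ℝ} {c : ℝ} (hc : 0 ≤ c) :
    specNorm A ≤ c ↔ ∀ v, (A *ᵥ v) ⬝ᵥ (A *ᵥ v) ≤ c ^ 2 * (v ⬝ᵥ v) := by
  set hH := isHermitian_transpose_mul_self A
  constructor
  · intro hA v
    have heig (i : Fin n) : hH.eigenvalues i ≤ c ^ 2 := by
      have h0 : 0 ≤ hH.eigenvalues i := by
        rw [eigenvalues_transpose_mul_self]
        exact dotProduct_self_star_nonneg _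
      rw [← Real.sq_sqrt h0]
      exact pow_le_pow_left₀ (Real.sqrt_nonneg _) ((singVals_le_specNorm A i).trans hA) 2
    rw [mulVec_dotProduct_mulVec]
    exact hH.dotProduct_mulVec_le_of_eigenvalues_le heig v
  · intro hA
    refine Real.iSup_le (fun i => ?_) hc
    rw [singVals_eq, eigenvalues_transpose_mul_self, ← Real.sqrt_sq hc]
    refine Real.sqrt_le_sqrt ((hA _).trans_eq ?_)
    rw [hH.eigenvectorBasis_dotProduct_self, mul_one]

lemma sqrt_dotProduct_mulVec_self_le_specNorm (A : Matrix (Fin m) (Fin n) ℝ) {v : Fin n → ℝ}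
    (hv : v ⬝ᵥ v = 1) : √((A *ᵥ v) ⬝ᵥ (A *ᵥ v)) ≤ specNorm A := by
  have h := (specNorm_le_iff (specNorm_nonneg A)).mp le_rfl v
  rw [hv, mul_one] at h
  exact (Real.sqrt_le_left (specNorm_nonneg A)).mpr h

end SingularValues

section TraceInner

variable {m n : ℕ}

lemma minner_eq_trace (A B : Matrix (Fin m) (Fin n) ℝ) : minner A B = trace (Aᵀ * B) := by
  simp only [minner, trace, Matrix.diag, mul_apply, transpose_apply]
  exact Finset.sum_comm

lemma minner_sub_right (G A B : Matrix (Fin m) (Fin n) ℝ) :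
    minner G (A - B) = minner G A - minner G B := by
  simp only [minner_eq_trace, Matrix.mul_sub, trace_sub]

lemma minner_le_specNorm_mul_nnorm (G A : Matrix (Fin m) (Fin n) ℝ) :
    minner G A ≤ specNorm G * nnorm A := by
  set hH := isHermitian_transpose_mul_self A
  rw [minner_eq_trace, trace_eq_sum_dotProduct_mulVec hH.eigenvectorUnitary_mul_transpose_self,
    nnorm, Finset.mul_sum]
  refine Finset.sum_le_sum fun i _ => ?_
  rw [← mulVec_dotProduct_mulVec, IsHermitian.eigenvectorUnitary_transpose_apply, singVals_eq,
    eigenvalues_transpose_mul_self]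
  exact (dotProduct_le_sqrt_mul_sqrt _ _).trans <| mul_le_mul_of_nonneg_right
    (sqrt_dotProduct_mulVec_self_le_specNorm G (hH.eigenvectorBasis_dotProduct_self i))
    (Real.sqrt_nonneg _)

end TraceInner

section NuclearNormSVD

open scoped MatrixOrder

variable {m n r : ℕ}

lemma nnorm_eq_trace_sqrt (A : Matrix (Fin m) (Fin n) ℝ) :
    nnorm A = (CFC.sqrt (Aᵀ * A)).trace := by
  have hA : (Aᵀ * A).PosSemidef := by
    simpa [conjTranspose_eq_transpose_of_trivial] using posSemidef_conjTranspose_mul_self A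
  rw [CFC.sqrt_eq_cfc, cfc_nnreal_eq_real _ _ hA.nonneg, hA.1.cfc_eq, IsHermitian.cfc,
    Unitary.conjStarAlgAut_apply, trace_mul_cycle, Unitary.coe_star_mul_self, Matrix.one_mul,
    trace_diagonal]
  refine Finset.sum_congr rfl fun i _ => ?_
  simp [singVals_eq, hA.eigenvalues_nonneg i]

lemma nnorm_mul_diagonal_mul_transpose {U : Matrix (Fin m) (Fin r) ℝ}
    {V : Matrix (Fin n) (Fin r) ℝ} (hU : Uᵀ * U = 1) (hV : Vᵀ * V = 1) {d : Fin r → ℝ}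
    (hd : ∀ i, 0 ≤ d i) : nnorm (U * diagonal d * Vᵀ) = ∑ i, d i := by
  set S := V * diagonal d * Vᵀ
  have hS : S.PosSemidef := by
    simpa [S, conjTranspose_eq_transpose_of_trivial] using
      (posSemidef_diagonal_iff.mpr hd).mul_mul_conjTranspose_same V
  have hSS : S * S = (U * diagonal d * Vᵀ)ᵀ * (U * diagonal d * Vᵀ) := by
    simp only [S, transpose_mul, transpose_transpose, diagonal_transpose, Matrix.mul_assoc]
    rw [← Matrix.mul_assoc Vᵀ V, ← Matrix.mul_assoc Uᵀ U, hU, hV]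
  rw [nnorm_eq_trace_sqrt, ← hSS, CFC.sqrt_unique rfl hS.nonneg, trace_mul_cycle, hV,
    Matrix.one_mul, trace_diagonal]

end NuclearNormSVD

section Subgradient

variable {m n r : ℕ} {U : Matrix (Fin m) (Fin r) ℝ} {V : Matrix (Fin n) (Fin r) ℝ}
  {W : Matrix (Fin m) (Fin n) ℝ}

lemma minner_mul_transpose_add_mul_diagonal_mul_transpose (hU : Uᵀ * U = 1) (hV : Vᵀ * V = 1)
    (hUW : Uᵀ * W = 0) (d : Fin r → ℝ) :
    minner (U * Vᵀ + W) (U * diagonal d * Vᵀ) = ∑ i, d i := by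
  have hWU : Wᵀ * U = 0 := by rw [← transpose_transpose U, ← transpose_mul, hUW, transpose_zero]
  rw [minner_eq_trace, transpose_add, Matrix.add_mul, trace_add, transpose_mul,
    transpose_transpose]
  simp only [Matrix.mul_assoc]
  rw [← Matrix.mul_assoc Uᵀ U, hU, ← Matrix.mul_assoc Wᵀ U, hWU, Matrix.one_mul,
    Matrix.zero_mul, trace_zero, add_zero, trace_mul_comm, Matrix.mul_assoc, hV, Matrix.mul_one,
    trace_diagonal]

lemma specNorm_mul_transpose_add_le_one (hU : Uᵀ * U = 1) (hV : Vᵀ * V = 1) (hUW : Uᵀ * W = 0)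
    (hWV : W * V = 0) (hW : specNorm W ≤ 1) : specNorm (U * Vᵀ + W) ≤ 1 := by
  rw [specNorm_le_iff zero_le_one]
  intro v
  set p := Vᵀ *ᵥ v
  set w := v - V *ᵥ p
  have hGv : (U * Vᵀ + W) *ᵥ v = U *ᵥ p + W *ᵥ w := by
    simp only [w, add_mulVec, mulVec_sub, mulVec_mulVec, hWV, zero_mulVec, sub_zero]
    rw [← mulVec_mulVec]
  have hww : w ⬝ᵥ w = v ⬝ᵥ v - p ⬝ᵥ p := by
    have hVpv : (V *ᵥ p) ⬝ᵥ v = p ⬝ᵥ p := by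
      rw [dotProduct_comm, dotProduct_mulVec, ← mulVec_transpose]
    have hVpVp : (V *ᵥ p) ⬝ᵥ (V *ᵥ p) = p ⬝ᵥ p := by
      rw [mulVec_dotProduct_mulVec, hV, one_mulVec]
    simp only [w, sub_dotProduct, dotProduct_sub, hVpVp, hVpv, dotProduct_comm v (V *ᵥ p)]
    ring
  have hUp : (U *ᵥ p) ⬝ᵥ (U *ᵥ p) = p ⬝ᵥ p := by rw [mulVec_dotProduct_mulVec, hU, one_mulVec]
  have hUpWw : (U *ᵥ p) ⬝ᵥ (W *ᵥ w) = 0 := by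
    rw [mulVec_dotProduct_mulVec, hUW, zero_mulVec, dotProduct_zero]
  have hWw := (specNorm_le_iff zero_le_one).mp hW w
  rw [hGv, add_dotProduct, dotProduct_add, dotProduct_add, hUp, hUpWw, dotProduct_comm (W *ᵥ w),
    hUpWw]
  linarith

end Subgradient

/-- `UVᵀ + W` with `UᵀW = 0`, `WV = 0`, `‖W‖₂ ≤ 1` is a
subgradient of the nuclear norm at `Z = U D Vᵀ`. -/
theorem nuclear_norm_subgradient {m n r : ℕ}
    (Z : Matrix (Fin m) (Fin n) ℝ) (U : Matrix (Fin m) (Fin r) ℝ)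
    (d : Fin r → ℝ) (V : Matrix (Fin n) (Fin r) ℝ)
    (hSVD : IsSVD Z U d V)
    (W : Matrix (Fin m) (Fin n) ℝ)
    (hUW : Uᵀ * W = 0) (hWV : W * V = 0) (hW : specNorm W ≤ 1) :
    ∀ Y : Matrix (Fin m) (Fin n) ℝ,
      nnorm Z + minner (U * Vᵀ + W) (Y - Z) ≤ nnorm Y := by
  obtain ⟨hU, hV, hd, rfl⟩ := hSVD
  intro Y
  calc nnorm (U * diagonal d * Vᵀ) + minner (U * Vᵀ + W) (Y - U * diagonal d * Vᵀ)
      = minner (U * Vᵀ + W) Y := by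
        rw [minner_sub_right, nnorm_mul_diagonal_mul_transpose hU hV fun i => (hd i).le,
          minner_mul_transpose_add_mul_diagonal_mul_transpose hU hV hUW d]
        ring
    _ ≤ specNorm (U * Vᵀ + W) * nnorm Y := minner_le_specNorm_mul_nnorm _ _
    _ ≤ nnorm Y :=
        mul_le_of_le_one_left (nnorm_nonneg Y) (specNorm_mul_transpose_add_le_one hU hV hUW hWV hW)
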